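/- Let m ≥ 1, let a, b ∈ [0,1], and let f : ℝ → EuclideanSpace ℝ (Fin (4 + m)) be continuous on [0,1]. Let π : EuclideanSpace ℝ (Fin (4+m)) → EuclideanSpace ℝ (Fin 4) be the projection onto the first four coordinates. Assume (π ∘ f) 0 = y(a,b), (π ∘ f) 1 = z(a,b), and (π ∘ f) t ∈ S for every t ∈ Set.Icc (0:ℝ) 1. If there is an index j among the last m coordinates with |f 1 j − f 0 j| ≥ 1/2, then eVariationOn f (Set.Icc 0 1) ≥ ENNReal.ofReal (3/2). -/

import Mathlib

/-!
Every point of `S` satisfies `(v 1 = 0 ∨ v 0 = 1) ∧ (v 3 = 0 ∨ v 2 = 1)`, while `y(a,b)` has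
`v 1 = 0`, `v 3 = 0` and `z(a,b)` has `v 0 = 1`, `v 2 = 1`. By connectedness of `[0,1]` the
projected path therefore passes through a point with `v 0 = 1, v 1 = 0` and through a point with
`v 2 = 1, v 3 = 0`. Cutting the path at these two times gives three chords; on each of them two of
the four cube coordinates move, and these six displacements telescope to a total of at least `2`,
while the extra coordinate moves by at least `1/2`. Bounding each chord below by Cauchy–Schwarz
against the unit weights `(2/3, 2/3, 1/3)` gives a length of at least `(2 * 2 + 1/2) / 3 = 3/2`.
-/

open scoped ENNReal

def S : Set (EuclideanSpace ℝ (Fin 4)) :=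
  ({v | v 1 = 0 ∧ v 3 = 0} ∪ {v | v 1 = 0 ∧ v 2 = 1} ∪
     {v | v 0 = 1 ∧ v 3 = 0} ∪ {v | v 0 = 1 ∧ v 2 = 1}) ∩
    {v | ∀ i, v i ∈ Set.Icc (0 : ℝ) 1}

noncomputable def yPt (a b : ℝ) : EuclideanSpace ℝ (Fin 4) :=
  (WithLp.equiv 2 (Fin 4 → ℝ)).symm ![a, 0, b, 0]

noncomputable def zPt (a b : ℝ) : EuclideanSpace ℝ (Fin 4) :=
  (WithLp.equiv 2 (Fin 4 → ℝ)).symm ![1, a, 1, b]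

noncomputable def projFour (m : ℕ) (v : EuclideanSpace ℝ (Fin (4 + m))) :
    EuclideanSpace ℝ (Fin 4) :=
  (WithLp.equiv 2 (Fin 4 → ℝ)).symm fun i => v (Fin.castAdd m i)

open Set

namespace EuclideanSpace

variable {ι : Type*} [Fintype ι]

theorem sum_mul_abs_sub_le_dist (s : Finset ι) {c : ι → ℝ} (hc : ∑ i ∈ s, c i ^ 2 ≤ 1)
    (v w : EuclideanSpace ℝ ι) : ∑ i ∈ s, c i * |v i - w i| ≤ dist v w := by
  calc ∑ i ∈ s, c i * |v i - w i|
      ≤ √(∑ i ∈ s, c i ^ 2) * √(∑ i ∈ s, |v i - w i| ^ 2) :=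
        Real.sum_mul_le_sqrt_mul_sqrt s c _
    _ ≤ 1 * √(∑ i, dist (v i) (w i) ^ 2) := by
        gcongr
        · exact Real.sqrt_le_one.mpr hc
        · simp only [Real.dist_eq]
          exact Finset.sum_le_sum_of_subset_of_nonneg s.subset_univ fun _ _ _ => sq_nonneg _
    _ = dist v w := by rw [one_mul, EuclideanSpace.dist_eq]

theorem two_thirds_abs_add_one_third_abs_le_dist {i j k : ι} (hij : i ≠ j) (hik : i ≠ k)
    (hjk : j ≠ k) (v w : EuclideanSpace ℝ ι) :
    (2 * |v i - w i| + 2 * |v j - w j| + |v k - w k|) / 3 ≤ dist v w := by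
  classical
  have h := sum_mul_abs_sub_le_dist {i, j, k} (c := fun l => if l = k then 1 / 3 else 2 / 3)
    (by simp [Finset.sum_insert, hij, hik, hjk]; norm_num) v w
  simp only [Finset.mem_insert, Finset.mem_singleton, hij, hik, hjk, or_self, not_false_eq_true,
    Finset.sum_insert, Finset.sum_singleton, ite_mul, ↓reduceIte] at h
  linarith

theorem three_halves_le_dist_add_dist_add_dist {i₀ i₁ i₂ i₃ k : ι} (h₀₂ : i₀ ≠ i₂)
    (h₁₂ : i₁ ≠ i₂) (h₁₃ : i₁ ≠ i₃) (h₀k : i₀ ≠ k) (h₁k : i₁ ≠ k) (h₂k : i₂ ≠ k) (h₃k : i₃ ≠ k)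
    {y p q z : EuclideanSpace ℝ ι} (hp₀ : p i₀ = 1) (hp₁ : p i₁ = 0) (hq₂ : q i₂ = 1)
    (hq₃ : q i₃ = 0) (hyz₀₁ : y i₀ = z i₁) (hyz₂₃ : y i₂ = z i₃) (hk : 1 / 2 ≤ |z k - y k|) :
    3 / 2 ≤ dist y p + dist p q + dist q z := by
  have hyp := two_thirds_abs_add_one_third_abs_le_dist h₀₂ h₀k h₂k y p
  have hpq := two_thirds_abs_add_one_third_abs_le_dist h₁₂ h₁k h₂k p q
  have hqz := two_thirds_abs_add_one_third_abs_le_dist h₁₃ h₁k h₃k q z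
  have hk' : |z k - y k| ≤ |y k - p k| + |p k - q k| + |q k - z k| := by
    rw [abs_sub_comm]
    calc |y k - z k| = |(y k - p k) + (p k - q k) + (q k - z k)| := by ring_nf
      _ ≤ _ := abs_add_three _ _ _
  rw [hyz₀₁, hyz₂₃, hp₀] at hyp
  rw [hp₁, hq₂] at hpq
  rw [hq₃] at hqz
  linarith [neg_le_abs (z i₁ - 1), neg_le_abs (z i₃ - p i₂), neg_le_abs (0 - q i₁),
    neg_le_abs (p i₂ - 1), neg_le_abs (q i₁ - z i₁), neg_le_abs (0 - z i₃)]

end EuclideanSpace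

theorem edist_add_eVariationOn_Icc_le {α E : Type*} [LinearOrder α] [PseudoEMetricSpace E]
    (f : α → E) {a s b : α} (has : a ≤ s) (hsb : s ≤ b) :
    edist (f a) (f s) + eVariationOn f (Icc s b) ≤ eVariationOn f (Icc a b) := by
  have h := eVariationOn.Icc_add_Icc f has hsb (mem_univ s)
  simp only [univ_inter] at h
  rw [← h]
  gcongr
  exact eVariationOn.edist_le f ⟨le_rfl, has⟩ ⟨has, le_rfl⟩

theorem edist_add_edist_add_edist_le_eVariationOn {α E : Type*} [LinearOrder α]
    [PseudoEMetricSpace E] (f : α → E) {a s₁ s₂ b : α} (h₁ : a ≤ s₁) (h₁₂ : s₁ ≤ s₂)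
    (h₂ : s₂ ≤ b) :
    edist (f a) (f s₁) + edist (f s₁) (f s₂) + edist (f s₂) (f b) ≤ eVariationOn f (Icc a b) :=
  calc edist (f a) (f s₁) + edist (f s₁) (f s₂) + edist (f s₂) (f b)
      ≤ edist (f a) (f s₁) + (edist (f s₁) (f s₂) + eVariationOn f (Icc s₂ b)) := by
        rw [add_assoc]
        gcongr
        exact eVariationOn.edist_le f ⟨le_rfl, h₂⟩ ⟨h₂, le_rfl⟩
    _ ≤ eVariationOn f (Icc a b) := by
        grw [edist_add_eVariationOn_Icc_le f h₁₂ h₂,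
          edist_add_eVariationOn_Icc_le f h₁ (h₁₂.trans h₂)]

theorem ofReal_le_eVariationOn_of_le_dist_add_dist_add_dist {α E : Type*} [LinearOrder α]
    [PseudoMetricSpace E] (f : α → E) {a s₁ s₂ b : α} (h₁ : a ≤ s₁) (h₁₂ : s₁ ≤ s₂)
    (h₂ : s₂ ≤ b) {r : ℝ} (hr : r ≤ dist (f a) (f s₁) + dist (f s₁) (f s₂) + dist (f s₂) (f b)) :
    ENNReal.ofReal r ≤ eVariationOn f (Icc a b) := by
  grw [hr, ENNReal.ofReal_add (by positivity) dist_nonneg,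
    ENNReal.ofReal_add dist_nonneg dist_nonneg, ← edist_dist, ← edist_dist, ← edist_dist]
  exact edist_add_edist_add_edist_le_eVariationOn f h₁ h₁₂ h₂

theorem IsPreconnected.exists_eq_and_eq_of_forall_or {α β γ : Type*} [TopologicalSpace α]
    [TopologicalSpace β] [T1Space β] [TopologicalSpace γ] [T1Space γ] {s : Set α}
    (hs : IsPreconnected s) (hs' : IsClosed s) {g : α → β} {h : α → γ} (hg : ContinuousOn g s)
    (hh : ContinuousOn h s) {p : β} {q : γ} {x y : α} (hx : x ∈ s) (hy : y ∈ s)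
    (hgx : g x = p) (hhy : h y = q) (hcover : ∀ t ∈ s, g t = p ∨ h t = q) :
    ∃ t ∈ s, g t = p ∧ h t = q := by
  obtain ⟨t, hts, ⟨-, hgt⟩, -, hht⟩ := isPreconnected_closed_iff.mp hs _ _
    (hg.preimage_isClosed_of_isClosed hs' isClosed_singleton)
    (hh.preimage_isClosed_of_isClosed hs' isClosed_singleton)
    (fun t ht => (hcover t ht).imp (fun h => ⟨ht, h⟩) (fun h => ⟨ht, h⟩))
    ⟨x, hx, hx, hgx⟩ ⟨y, hy, hy, hhy⟩
  exact ⟨t, hts, hgt, hht⟩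

theorem or_and_or_of_mem_S {v : EuclideanSpace ℝ (Fin 4)} (hv : v ∈ S) :
    (v 1 = 0 ∨ v 0 = 1) ∧ (v 3 = 0 ∨ v 2 = 1) := by
  rcases hv.1 with ((⟨h₁, h₃⟩ | ⟨h₁, h₂⟩) | ⟨h₀, h₃⟩) | ⟨h₀, h₂⟩ <;> simp [*]

theorem stmt4_general (m : ℕ) (a b : ℝ)
    (f : ℝ → EuclideanSpace ℝ (Fin (4 + m))) (hf : ContinuousOn f (Set.Icc 0 1))
    (h0 : projFour m (f 0) = yPt a b) (h1 : projFour m (f 1) = zPt a b)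
    (hS : ∀ t ∈ Set.Icc (0 : ℝ) 1, projFour m (f t) ∈ S)
    (j : Fin m) (hj : 1 / 2 ≤ |f 1 (Fin.natAdd 4 j) - f 0 (Fin.natAdd 4 j)|) :
    ENNReal.ofReal (3 / 2) ≤ eVariationOn f (Set.Icc 0 1) := by
  let x (i : Fin 4) : Fin (4 + m) := Fin.castAdd m i
  have hy (i : Fin 4) : f 0 (x i) = yPt a b i := congrArg (· i) h0
  have hz (i : Fin 4) : f 1 (x i) = zPt a b i := congrArg (· i) h1
  have hx (i : Fin 4) : ContinuousOn (fun t => f t (x i)) (Icc 0 1) :=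
    (EuclideanSpace.proj (x i)).continuous.comp_continuousOn hf
  have hne : ∀ i i', i ≠ i' → x i ≠ x i' := fun i i' h => (Fin.castAdd_injective _ _).ne h
  have hxk (i : Fin 4) : x i ≠ Fin.natAdd 4 j := by
    simp only [x, ne_eq, Fin.ext_iff, Fin.val_castAdd, Fin.val_natAdd]
    omega
  have h01 : (0 : ℝ) ∈ Icc 0 1 := left_mem_Icc.2 zero_le_one
  have h11 : (1 : ℝ) ∈ Icc 0 1 := right_mem_Icc.2 zero_le_one
  obtain ⟨t₁, ht₁, hx₁, hx₀⟩ := isPreconnected_Icc.exists_eq_and_eq_of_forall_or isClosed_Icc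
    (hx 1) (hx 0) h01 h11 (by simpa [yPt] using hy 1) (by simpa [zPt] using hz 0)
    fun t ht => (or_and_or_of_mem_S (hS t ht)).1
  obtain ⟨t₂, ht₂, hx₃, hx₂⟩ := isPreconnected_Icc.exists_eq_and_eq_of_forall_or isClosed_Icc
    (hx 3) (hx 2) h01 h11 (by simpa [yPt] using hy 3) (by simpa [zPt] using hz 2)
    fun t ht => (or_and_or_of_mem_S (hS t ht)).2
  have hyz₀₁ : f 0 (x 0) = f 1 (x 1) := by simp [hy, hz, yPt, zPt]
  have hyz₂₃ : f 0 (x 2) = f 1 (x 3) := by simp [hy, hz, yPt, zPt]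
  rcases le_total t₁ t₂ with h | h
  · exact ofReal_le_eVariationOn_of_le_dist_add_dist_add_dist f ht₁.1 h ht₂.2 <|
      EuclideanSpace.three_halves_le_dist_add_dist_add_dist (hne 0 2 (by decide))
        (hne 1 2 (by decide)) (hne 1 3 (by decide)) (hxk 0) (hxk 1) (hxk 2) (hxk 3)
        hx₀ hx₁ hx₂ hx₃ hyz₀₁ hyz₂₃ hj
  · exact ofReal_le_eVariationOn_of_le_dist_add_dist_add_dist f ht₂.1 h ht₁.2 <|
      EuclideanSpace.three_halves_le_dist_add_dist_add_dist (hne 2 0 (by decide))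
        (hne 3 0 (by decide)) (hne 3 1 (by decide)) (hxk 2) (hxk 3) (hxk 0) (hxk 1)
        hx₂ hx₃ hx₀ hx₁ hyz₂₃ hyz₀₁ hj

theorem stmt4 (m : ℕ) (hm : 1 ≤ m) (a b : ℝ)
    (ha : a ∈ Set.Icc (0 : ℝ) 1) (hb : b ∈ Set.Icc (0 : ℝ) 1)
    (f : ℝ → EuclideanSpace ℝ (Fin (4 + m))) (hf : ContinuousOn f (Set.Icc 0 1))
    (h0 : projFour m (f 0) = yPt a b) (h1 : projFour m (f 1) = zPt a b)
    (hS : ∀ t ∈ Set.Icc (0 : ℝ) 1, projFour m (f t) ∈ S)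
    (j : Fin m) (hj : 1 / 2 ≤ |f 1 (Fin.natAdd 4 j) - f 0 (Fin.natAdd 4 j)|) :
    ENNReal.ofReal (3 / 2) ≤ eVariationOn f (Set.Icc 0 1) :=
  stmt4_general m a b f hf h0 h1 hS j hj
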